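/- The element Q̃(f̂) is the Chebyshev center of Q̃(C_y): for every z ∈ Z, lwce_y(z) ≥ lwce_y(Q̃ f̂), and the squared Chebyshev radius equals lwce_y(Q̃ f̂)² = λ_max · (1 − ‖T f̂‖²) = ‖Q̃ ĥ‖². -/

import Mathlib

open scoped ENNReal

/-!
Minimality of `f̂` makes `T f̂` orthogonal to `T (ker Λ)`, so by Pythagoras the feasible set is
`f̂ + {h ∈ ker Λ : ‖T h‖² ≤ 1 - ‖T f̂‖²}`. On that set the Rayleigh bound gives
`‖Q̃ h‖² ≤ λ_max (1 - ‖T f̂‖²) = ‖Q̃ ĥ‖²`, so `Q̃(C_y)` lies in the ball of radius `‖Q̃ ĥ‖` about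
`Q̃ f̂`. Conversely `f̂ ± ĥ` are feasible, and every `z` is at distance at least `‖Q̃ ĥ‖` from one
of the antipodal points `Q̃ f̂ ± Q̃ ĥ`.
-/

section ChebyshevCenter

variable {α E : Type*} [SeminormedAddCommGroup E]

theorem norm_le_max_norm_add_sub_norm_sub_sub [NormedSpace ℝ E] (c v z : E) :
    ‖v‖ ≤ max ‖c + v - z‖ ‖c - v - z‖ := by
  have h : (2 : ℝ) * ‖v‖ ≤ ‖c + v - z‖ + ‖c - v - z‖ := by
    calc (2 : ℝ) * ‖v‖ = ‖(c + v - z) - (c - v - z)‖ := by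
          rw [show (c + v - z) - (c - v - z) = v + v by abel, ← two_smul ℝ v, norm_smul,
            Real.norm_two]
      _ ≤ ‖c + v - z‖ + ‖c - v - z‖ := norm_sub_le _ _
  linarith [le_max_left ‖c + v - z‖ ‖c - v - z‖, le_max_right ‖c + v - z‖ ‖c - v - z‖]

variable {φ : α → E} {C : Set α} {c v : E} {a b : α}

theorem ofReal_norm_le_iSup_norm_sub_of_antipodal [NormedSpace ℝ E] (ha : a ∈ C) (hb : b ∈ C)
    (hφa : φ a = c + v) (hφb : φ b = c - v) (z : E) :
    ENNReal.ofReal ‖v‖ ≤ ⨆ f ∈ C, ENNReal.ofReal ‖φ f - z‖ := by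
  rcases le_max_iff.mp (norm_le_max_norm_add_sub_norm_sub_sub c v z) with h | h
  · exact (ENNReal.ofReal_le_ofReal (hφa ▸ h)).trans (le_iSup₂_of_le a ha le_rfl)
  · exact (ENNReal.ofReal_le_ofReal (hφb ▸ h)).trans (le_iSup₂_of_le b hb le_rfl)

theorem iSup_norm_sub_eq_of_antipodal (ha : a ∈ C) (hφa : φ a = c + v)
    (hbound : ∀ f ∈ C, ‖φ f - c‖ ≤ ‖v‖) :
    ⨆ f ∈ C, ENNReal.ofReal ‖φ f - c‖ = ENNReal.ofReal ‖v‖ := by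
  refine le_antisymm (iSup₂_le fun f hf => ENNReal.ofReal_le_ofReal (hbound f hf)) ?_
  exact le_iSup₂_of_le a ha (by rw [hφa, add_sub_cancel_left])

end ChebyshevCenter

theorem real_inner_eq_zero_of_forall_norm_sq_le_norm_add_smul_sq {G : Type*}
    [NormedAddCommGroup G] [InnerProductSpace ℝ G] {x y : G}
    (h : ∀ t : ℝ, ‖x‖ ^ 2 ≤ ‖x + t • y‖ ^ 2) : inner ℝ x y = 0 := by
  set a := inner ℝ x y
  set b := ‖y‖ ^ 2
  have hb : 0 ≤ b := by positivity
  -- at `t = -a / (b + 1)` the increase of `‖x + t • y‖²` is `-a² (b + 2) / (b + 1)²`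
  have key := h (-a / (b + 1))
  rw [norm_add_sq_real, real_inner_smul_right, norm_smul, mul_pow, Real.norm_eq_abs, sq_abs]
    at key
  have hsq : a ^ 2 * (b + 2) ≤ 0 := by
    field_simp at key
    nlinarith
  nlinarith [sq_nonneg a]

section MinimalNormInterpolant

variable {F G W : Type*} [AddCommGroup F] [Module ℝ F]
  [NormedAddCommGroup G] [InnerProductSpace ℝ G] [AddCommGroup W] [Module ℝ W]
  {T : F →ₗ[ℝ] G} {Λ : F →ₗ[ℝ] W} {f₀ : F}

theorem real_inner_map_eq_zero_of_forall_norm_sq_le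
    (hmin : ∀ g : F, Λ g = Λ f₀ → ‖T f₀‖ ^ 2 ≤ ‖T g‖ ^ 2) {h : F} (hh : h ∈ LinearMap.ker Λ) :
    inner ℝ (T f₀) (T h) = 0 :=
  real_inner_eq_zero_of_forall_norm_sq_le_norm_add_smul_sq fun t => by
    simpa using hmin (f₀ + t • h) (by simp [LinearMap.mem_ker.mp hh])

theorem norm_map_add_sq_of_forall_norm_sq_le
    (hmin : ∀ g : F, Λ g = Λ f₀ → ‖T f₀‖ ^ 2 ≤ ‖T g‖ ^ 2) {h : F} (hh : h ∈ LinearMap.ker Λ) :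
    ‖T (f₀ + h)‖ ^ 2 = ‖T f₀‖ ^ 2 + ‖T h‖ ^ 2 := by
  rw [map_add, norm_add_sq_real, real_inner_map_eq_zero_of_forall_norm_sq_le hmin hh]
  ring

theorem norm_map_add_le_one_iff
    (hmin : ∀ g : F, Λ g = Λ f₀ → ‖T f₀‖ ^ 2 ≤ ‖T g‖ ^ 2) {h : F} (hh : h ∈ LinearMap.ker Λ) :
    ‖T (f₀ + h)‖ ≤ 1 ↔ ‖T h‖ ^ 2 ≤ 1 - ‖T f₀‖ ^ 2 := by
  rw [← sq_le_one_iff₀ (norm_nonneg _), norm_map_add_sq_of_forall_norm_sq_le hmin hh]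
  constructor <;> intro <;> linarith

end MinimalNormInterpolant

theorem norm_apply_le_of_rayleigh_bound {F G Z : Type*} [AddCommGroup F] [Module ℝ F]
    [SeminormedAddCommGroup G] [Module ℝ G] [SeminormedAddCommGroup Z] [Module ℝ Z]
    {T : F →ₗ[ℝ] G} {Q : F →ₗ[ℝ] Z} {N : Submodule ℝ F} {lam r : ℝ}
    (hlam : ∀ h ∈ N, ‖Q h‖ ^ 2 ≤ lam * ‖T h‖ ^ 2) {ĥ : F} (hĥ : ‖Q ĥ‖ ^ 2 = lam * r)
    {h : F} (hN : h ∈ N) (hh : ‖T h‖ ^ 2 ≤ r) : ‖Q h‖ ≤ ‖Q ĥ‖ := by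
  refine (sq_le_sq₀ (norm_nonneg _) (norm_nonneg _)).mp ?_
  rcases le_or_gt 0 lam with hl | hl
  · exact (hlam h hN).trans (hĥ ▸ mul_le_mul_of_nonneg_left hh hl)
  · nlinarith [hlam h hN, sq_nonneg ‖T h‖, sq_nonneg ‖Q ĥ‖]

theorem statement11_general
    {F G Z : Type*}
    [NormedAddCommGroup F] [InnerProductSpace ℝ F]
    [NormedAddCommGroup G] [InnerProductSpace ℝ G]
    [NormedAddCommGroup Z] [InnerProductSpace ℝ Z]
    {m : ℕ}
    (T : F →ₗ[ℝ] G) (Qt : F →ₗ[ℝ] Z) (Λ : F →ₗ[ℝ] (Fin m → ℝ))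
    (y : Fin m → ℝ)
    -- `f̂` is the minimal-`‖T·‖` data-consistent element
    (fhat : F) (hfhatΛ : Λ fhat = y)
    (hfhatmin : ∀ g : F, Λ g = y → ‖T fhat‖ ^ 2 ≤ ‖T g‖ ^ 2)
    -- `λ_max` is the largest value of the quotient `‖Q̃h‖²/‖Th‖²` over `ker Λ ∖ {0}`,
    -- attained at the normalized maximizer `ĥ`
    (lamMax : ℝ)
    (hlam : ∀ h ∈ LinearMap.ker Λ, ‖Qt h‖ ^ 2 ≤ lamMax * ‖T h‖ ^ 2)
    (hhat : F) (hhatmem : hhat ∈ LinearMap.ker Λ)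
    (hhatattain : ‖Qt hhat‖ ^ 2 = lamMax * ‖T hhat‖ ^ 2)
    (hhatnorm : ‖T hhat‖ ^ 2 = 1 - ‖T fhat‖ ^ 2) :
    (∀ z : Z,
      (⨆ f ∈ {f : F | ‖T f‖ ≤ 1 ∧ Λ f = y}, ENNReal.ofReal ‖Qt f - Qt fhat‖) ≤
        ⨆ f ∈ {f : F | ‖T f‖ ≤ 1 ∧ Λ f = y}, ENNReal.ofReal ‖Qt f - z‖) ∧
    (⨆ f ∈ {f : F | ‖T f‖ ≤ 1 ∧ Λ f = y}, ENNReal.ofReal ‖Qt f - Qt fhat‖) ^ 2 =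
      ENNReal.ofReal (lamMax * (1 - ‖T fhat‖ ^ 2)) ∧
    (⨆ f ∈ {f : F | ‖T f‖ ≤ 1 ∧ Λ f = y}, ENNReal.ofReal ‖Qt f - Qt fhat‖) ^ 2 =
      ENNReal.ofReal (‖Qt hhat‖ ^ 2) := by
  subst hfhatΛ
  have hmem : ∀ h ∈ LinearMap.ker Λ, ‖T h‖ ^ 2 ≤ 1 - ‖T fhat‖ ^ 2 →
      fhat + h ∈ {f : F | ‖T f‖ ≤ 1 ∧ Λ f = Λ fhat} := fun h hh hTh =>
    ⟨(norm_map_add_le_one_iff hfhatmin hh).mpr hTh, by simp [LinearMap.mem_ker.mp hh]⟩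
  have hplus := hmem hhat hhatmem hhatnorm.le
  have hminus : fhat - hhat ∈ {f : F | ‖T f‖ ≤ 1 ∧ Λ f = Λ fhat} := by
    simpa [sub_eq_add_neg] using hmem (-hhat) (neg_mem hhatmem) (by simpa using hhatnorm.le)
  have hbound : ∀ f ∈ {f : F | ‖T f‖ ≤ 1 ∧ Λ f = Λ fhat}, ‖Qt f - Qt fhat‖ ≤ ‖Qt hhat‖ := by
    rintro f ⟨hTf, hΛf⟩
    have hker : f - fhat ∈ LinearMap.ker Λ := by simp [hΛf]
    rw [← map_sub]
    refine norm_apply_le_of_rayleigh_bound hlam (hhatnorm ▸ hhatattain) hker ?_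
    exact (norm_map_add_le_one_iff hfhatmin hker).mp (by simpa using hTf)
  have hradius := iSup_norm_sub_eq_of_antipodal hplus (map_add Qt _ _) hbound
  rw [hradius, ← ENNReal.ofReal_pow (norm_nonneg _), hhatattain, hhatnorm]
  exact ⟨ofReal_norm_le_iSup_norm_sub_of_antipodal hplus hminus (map_add Qt _ _)
    (map_sub Qt _ _), rfl, rfl⟩

/-- one-hyperellipsoid Chebyshev center: `Q̃ f̂` is the Chebyshev
center of `Q̃(C_y)` and the squared Chebyshev radius equals
`λ_max · (1 − ‖T f̂‖²) = ‖Q̃ ĥ‖²`. -/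
theorem statement11
    {F G Z : Type*}
    [NormedAddCommGroup F] [InnerProductSpace ℝ F] [FiniteDimensional ℝ F]
    [NormedAddCommGroup G] [InnerProductSpace ℝ G] [FiniteDimensional ℝ G]
    [NormedAddCommGroup Z] [InnerProductSpace ℝ Z] [FiniteDimensional ℝ Z]
    {m : ℕ}
    (T : F →ₗ[ℝ] G) (Qt : F →ₗ[ℝ] Z) (Λ : F →ₗ[ℝ] (Fin m → ℝ))
    (hker : LinearMap.ker T ⊓ LinearMap.ker Λ = ⊥)
    (y : Fin m → ℝ)
    (hCne : {f : F | ‖T f‖ ≤ 1 ∧ Λ f = y}.Nonempty)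
    -- `f̂` is the minimal-`‖T·‖` data-consistent element
    (fhat : F) (hfhatΛ : Λ fhat = y)
    (hfhatmin : ∀ g : F, Λ g = y → ‖T fhat‖ ^ 2 ≤ ‖T g‖ ^ 2)
    -- `λ_max` is the largest value of the quotient `‖Q̃h‖²/‖Th‖²` over `ker Λ ∖ {0}`,
    -- attained at the normalized maximizer `ĥ`
    (lamMax : ℝ)
    (hlam : ∀ h ∈ LinearMap.ker Λ, ‖Qt h‖ ^ 2 ≤ lamMax * ‖T h‖ ^ 2)
    (hhat : F) (hhatmem : hhat ∈ LinearMap.ker Λ)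
    (hhatattain : ‖Qt hhat‖ ^ 2 = lamMax * ‖T hhat‖ ^ 2)
    (hhatnorm : ‖T hhat‖ ^ 2 = 1 - ‖T fhat‖ ^ 2) :
    (∀ z : Z,
      (⨆ f ∈ {f : F | ‖T f‖ ≤ 1 ∧ Λ f = y}, ENNReal.ofReal ‖Qt f - Qt fhat‖) ≤
        ⨆ f ∈ {f : F | ‖T f‖ ≤ 1 ∧ Λ f = y}, ENNReal.ofReal ‖Qt f - z‖) ∧
    (⨆ f ∈ {f : F | ‖T f‖ ≤ 1 ∧ Λ f = y}, ENNReal.ofReal ‖Qt f - Qt fhat‖) ^ 2 =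
      ENNReal.ofReal (lamMax * (1 - ‖T fhat‖ ^ 2)) ∧
    (⨆ f ∈ {f : F | ‖T f‖ ≤ 1 ∧ Λ f = y}, ENNReal.ofReal ‖Qt f - Qt fhat‖) ^ 2 =
      ENNReal.ofReal (‖Qt hhat‖ ^ 2) :=
  statement11_general T Qt Λ y fhat hfhatΛ hfhatmin lamMax hlam hhat hhatmem hhatattain hhatnorm
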